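/- (Theorem 2, general α.) For every real α > 1 and all x, x' ∈ [−C_q/2, C_q/2], the Rényi divergence of order α between the quantized-Gaussian pmfs at x and x' is bounded by ε_∞: (1/(α−1))·log(∑_{r=0}^{k−1} P_x(r)^α · P_{x'}(r)^{1−α}) ≤ log( δ / ∫_{B(k−2)}^{B(k−1)} f_{−C_q/2}(t)·(t−B(k−2)) dt ). -/

import Mathlib

open MeasureTheory Real

/-- Density of the normal distribution `N(x, σ²)`. -/
noncomputable def gpdf (σ x t : ℝ) : ℝ :=
  (1 / (σ * Real.sqrt (2 * Real.pi))) * Real.exp (-(t - x) ^ 2 / (2 * σ ^ 2))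

/-- Quantization levels `B(r) = -C_q + r · δ`, with `δ = 2·C_q/(k-1)`. -/
noncomputable def Blev (Cq : ℝ) (k : ℕ) (r : ℕ) : ℝ :=
  -Cq + (r : ℝ) * (2 * Cq / ((k : ℝ) - 1))

/-- The quantized-Gaussian pmf `P_x(r)` on `{0, 1, …, k-1}`. -/
noncomputable def qgPmf (Cq σ : ℝ) (k : ℕ) (x : ℝ) (r : ℕ) : ℝ :=
  if r = 0 then
    (∫ t in Set.Iic (Blev Cq k 0), gpdf σ x t)
      + ∫ t in (Blev Cq k 0)..(Blev Cq k 1),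
          gpdf σ x t * (Blev Cq k 1 - t) / (2 * Cq / ((k : ℝ) - 1))
  else if r = k - 1 then
    (∫ t in (Blev Cq k (k - 2))..(Blev Cq k (k - 1)),
        gpdf σ x t * (t - Blev Cq k (k - 2)) / (2 * Cq / ((k : ℝ) - 1)))
      + ∫ t in Set.Ici (Blev Cq k (k - 1)), gpdf σ x t
  else
    (∫ t in (Blev Cq k (r - 1))..(Blev Cq k r),
        gpdf σ x t * (t - Blev Cq k (r - 1)) / (2 * Cq / ((k : ℝ) - 1)))
      + ∫ t in (Blev Cq k r)..(Blev Cq k (r + 1)),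
          gpdf σ x t * (Blev Cq k (r + 1) - t) / (2 * Cq / ((k : ℝ) - 1))

/-!
Write `δ` for the quantization step and `I` for the integral in `ε_∞`. Each mass `P_x(r)` is at
least `δ⁻¹` times the `N(x, σ²)`-integral of the tent of height `δ` centred at `B(r)` (at the two
end levels a Gaussian tail replaces a half tent), while `I` is the `N(-C_q/2, σ²)`-integral of the
ramp rising from `0` at `C_q - δ` to `δ` at `C_q`. By the layer-cake formula it suffices to
compare superlevel sets: each one of the ramp is an interval ending at distance
`3C_q/2 ≥ |B(r) - x|` from the mean, and sliding it towards the mean shows that it carries less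
Gaussian mass than the symmetric interval of the same level of the tent. Hence `P_x(r) ≥ I/δ`
for all `r` and all `x ∈ [-C_q/2, C_q/2]`, and since `∑ P_x(r) = 1`,
`∑ P_x(r)^α P_{x'}(r)^{1-α} ≤ ∑ P_x(r) (I/δ)^{1-α} = (I/δ)^{1-α}`.
-/

open ProbabilityTheory Set NNReal

noncomputable def renyiDiv {ι : Type*} (s : Finset ι) (α : ℝ) (p q : ι → ℝ) : ℝ :=
  1 / (α - 1) * log (∑ i ∈ s, p i ^ α * q i ^ (1 - α))

theorem renyiDiv_le_neg_log {ι : Type*} {s : Finset ι} {α m : ℝ} {p q : ι → ℝ} (hα : 1 < α)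
    (hm : 0 < m) (hp : ∀ i ∈ s, 0 ≤ p i) (hp1 : ∑ i ∈ s, p i = 1) (hq : ∀ i ∈ s, m ≤ q i) :
    renyiDiv s α p q ≤ -log m := by
  have hq_pos : ∀ i ∈ s, 0 < q i := fun i hi => hm.trans_le (hq i hi)
  have hterm : ∀ i ∈ s, p i ^ α * q i ^ (1 - α) ≤ p i * m ^ (1 - α) := fun i hi =>
    mul_le_mul (rpow_le_self_of_le_one (hp i hi) (hp1 ▸ Finset.single_le_sum hp hi) hα.le)
      (rpow_le_rpow_of_nonpos hm (hq i hi) (by linarith)) (rpow_nonneg (hq_pos i hi).le _)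
      (hp i hi)
  have hsum_le : ∑ i ∈ s, p i ^ α * q i ^ (1 - α) ≤ m ^ (1 - α) :=
    (Finset.sum_le_sum hterm).trans_eq (by rw [← Finset.sum_mul, hp1, one_mul])
  have hsum_pos : 0 < ∑ i ∈ s, p i ^ α * q i ^ (1 - α) := by
    obtain ⟨i, hi, hpi⟩ : ∃ i ∈ s, (0 : ℝ) < p i :=
      Finset.exists_lt_of_sum_lt (by rw [Finset.sum_const_zero, hp1]; exact one_pos)
    refine Finset.sum_pos' (fun j hj => ?_) ⟨i, hi, ?_⟩
    · have := hq_pos j hj; have := hp j hj; positivity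
    · have := hq_pos i hi; positivity
  calc renyiDiv s α p q ≤ 1 / (α - 1) * ((1 - α) * log m) := by
        rw [renyiDiv, ← log_rpow hm]
        gcongr
    _ = -log m := by field_simp [(by linarith : α - 1 ≠ 0)]; ring

theorem lintegral_ofReal_le_of_superlevel_le {α : Type*} [MeasurableSpace α] {μ ν : Measure α}
    {f g : α → ℝ} (hf : 0 ≤ᵐ[μ] f) (hg : 0 ≤ᵐ[ν] g) (hfm : AEMeasurable f μ)
    (hgm : AEMeasurable g ν) (h : ∀ t > 0, μ {a | t ≤ f a} ≤ ν {a | t ≤ g a}) :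
    ∫⁻ a, ENNReal.ofReal (f a) ∂μ ≤ ∫⁻ a, ENNReal.ofReal (g a) ∂ν := by
  rw [lintegral_eq_lintegral_meas_le μ hf hfm, lintegral_eq_lintegral_meas_le ν hg hgm]
  exact setLIntegral_mono' measurableSet_Ioi h

theorem integral_le_of_superlevel_le {α : Type*} [MeasurableSpace α] {μ ν : Measure α}
    {f g : α → ℝ} (hf : 0 ≤ᵐ[μ] f) (hg : 0 ≤ᵐ[ν] g) (hfm : AEMeasurable f μ)
    (hgi : Integrable g ν) (h : ∀ t > 0, μ {a | t ≤ f a} ≤ ν {a | t ≤ g a}) :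
    ∫ a, f a ∂μ ≤ ∫ a, g a ∂ν := by
  rw [integral_eq_lintegral_of_nonneg_ae hf hfm.aestronglyMeasurable,
    integral_eq_lintegral_of_nonneg_ae hg hgi.aestronglyMeasurable]
  exact ENNReal.toReal_mono hgi.lintegral_lt_top.ne
    (lintegral_ofReal_le_of_superlevel_le hf hg hfm hgi.aemeasurable h)

section GaussianIntervals

variable {v : ℝ≥0}

theorem gaussianPDFReal_le_of_abs_le {μ μ' x y : ℝ} (h : |x - μ| ≤ |y - μ'|) :
    gaussianPDFReal μ' v y ≤ gaussianPDFReal μ v x := by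
  rw [gaussianPDFReal, gaussianPDFReal]
  gcongr _ * rexp (-?_ / _)
  exact sq_le_sq.2 h

theorem gaussianReal_Icc (m a b : ℝ) :
    gaussianReal m v (Icc a b) = gaussianReal 0 v (Icc (a - m) (b - m)) := by
  rw [← zero_add m, ← gaussianReal_map_add_const, Measure.map_apply (measurable_add_const m)
    measurableSet_Icc, preimage_add_const_Icc, zero_add]

theorem gaussianReal_zero_Icc_neg (a b : ℝ) :
    gaussianReal 0 v (Icc (-b) (-a)) = gaussianReal 0 v (Icc a b) := by
  conv_rhs => rw [← neg_zero, ← gaussianReal_map_neg, Measure.map_apply measurable_neg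
    measurableSet_Icc]
  congr 1
  ext x
  simp [and_comm]

theorem gaussianReal_zero_Icc_abs (c ℓ : ℝ) :
    gaussianReal 0 v (Icc (|c| - ℓ) (|c| + ℓ)) = gaussianReal 0 v (Icc (c - ℓ) (c + ℓ)) := by
  rcases abs_cases c with ⟨hc, -⟩ | ⟨hc, -⟩
  · rw [hc]
  · rw [hc, ← gaussianReal_zero_Icc_neg]; ring_nf

theorem gaussianReal_zero_Icc_add_le (hv : v ≠ 0) {a b : ℝ} (ha : 0 ≤ a) (hab : a ≤ b) (ℓ : ℝ) :
    gaussianReal 0 v (Icc b (b + ℓ)) ≤ gaussianReal 0 v (Icc a (a + ℓ)) := by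
  calc gaussianReal 0 v (Icc b (b + ℓ)) = gaussianReal (a - b) v (Icc a (a + ℓ)) := by
        rw [gaussianReal_Icc (a - b)]; ring_nf
    _ ≤ gaussianReal 0 v (Icc a (a + ℓ)) := by
        rw [gaussianReal_apply _ hv, gaussianReal_apply _ hv]
        refine setLIntegral_mono (measurable_gaussianPDF 0 v) fun x hx => ?_
        refine ENNReal.ofReal_le_ofReal (gaussianPDFReal_le_of_abs_le ?_)
        rw [abs_of_nonneg (by linarith [hx.1]), abs_of_nonneg (by linarith [hx.1])]
        linarith

theorem gaussianReal_zero_Icc_le (hv : v ≠ 0) {c D : ℝ} (hc : 0 ≤ c) (hcD : c ≤ D) (ℓ : ℝ) :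
    gaussianReal 0 v (Icc (D - ℓ) D) ≤ gaussianReal 0 v (Icc (c - ℓ) (c + ℓ)) := by
  rcases le_or_gt ℓ D with hℓ | hℓ
  · -- slide the interval towards the origin, to start at `max (c - ℓ) 0`, then include it
    set a := max (c - ℓ) 0
    have hslide := gaussianReal_zero_Icc_add_le hv (le_max_right _ _)
      (max_le (by linarith) (by linarith) : a ≤ D - ℓ) ℓ
    rw [sub_add_cancel] at hslide
    refine hslide.trans (measure_mono fun x hx => ⟨(le_max_left _ _).trans hx.1, ?_⟩)
    rcases max_cases (c - ℓ) 0 with ⟨h, -⟩ | ⟨h, -⟩ <;> linarith [hx.1, hx.2]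
  · exact measure_mono (Icc_subset_Icc (by linarith) (by linarith))

theorem gaussianReal_Icc_le (hv : v ≠ 0) {m m' c D : ℝ} (h : |c - m| ≤ D - m') (ℓ : ℝ) :
    gaussianReal m' v (Icc (D - ℓ) D) ≤ gaussianReal m v (Icc (c - ℓ) (c + ℓ)) := by
  have := gaussianReal_zero_Icc_le hv (abs_nonneg (c - m)) h ℓ
  rw [gaussianReal_zero_Icc_abs] at this
  rw [gaussianReal_Icc m', gaussianReal_Icc m]
  convert this using 3 <;> ring

end GaussianIntervals

section Tent

variable {δ c : ℝ}

noncomputable def rampUp (δ c : ℝ) : ℝ → ℝ := (Ioc (c - δ) c).indicator fun u => u - (c - δ)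

noncomputable def rampDown (δ c : ℝ) : ℝ → ℝ := (Ioc c (c + δ)).indicator fun u => c + δ - u

noncomputable def tent (δ c u : ℝ) : ℝ := max 0 (δ - |u - c|)

theorem rampUp_nonneg (δ c u : ℝ) : 0 ≤ rampUp δ c u :=
  indicator_nonneg (fun u hu => by linarith [hu.1]) u

theorem rampDown_nonneg (δ c u : ℝ) : 0 ≤ rampDown δ c u :=
  indicator_nonneg (fun u hu => by linarith [hu.2]) u

theorem tent_nonneg (δ c u : ℝ) : 0 ≤ tent δ c u := le_max_left _ _

theorem measurable_rampUp (δ c : ℝ) : Measurable (rampUp δ c) :=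
  (measurable_id.sub_const _).indicator measurableSet_Ioc

theorem integrable_rampUp (μ : Measure ℝ) [IsLocallyFiniteMeasure μ] (δ c : ℝ) :
    Integrable (rampUp δ c) μ :=
  (continuous_id.sub continuous_const).integrableOn_Ioc.integrable_indicator measurableSet_Ioc

theorem integrable_rampDown (μ : Measure ℝ) [IsLocallyFiniteMeasure μ] (δ c : ℝ) :
    Integrable (rampDown δ c) μ :=
  (continuous_const.sub continuous_id).integrableOn_Ioc.integrable_indicator measurableSet_Ioc

theorem rampUp_le_indicator_Iic (hδ : 0 ≤ δ) (u : ℝ) :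
    rampUp δ c u ≤ (Iic c).indicator (fun _ => δ) u := by
  unfold rampUp indicator
  split_ifs <;> simp_all [mem_Ioc, mem_Iic]

theorem rampDown_le_indicator_Ici (hδ : 0 ≤ δ) (u : ℝ) :
    rampDown δ c u ≤ (Ici c).indicator (fun _ => δ) u := by
  unfold rampDown indicator
  split_ifs <;> simp_all [mem_Ioc, mem_Ici] <;> linarith

theorem tent_eq_rampUp_add_rampDown (δ c : ℝ) : tent δ c = rampUp δ c + rampDown δ c := by
  ext u
  simp only [tent, rampUp, rampDown, Pi.add_apply, indicator_apply, mem_Ioc]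
  split_ifs <;> cases abs_cases (u - c) <;> grind

theorem setOf_le_rampUp {t : ℝ} (ht : 0 < t) :
    {u | t ≤ rampUp δ c u} = Icc (c - (δ - t)) c := by
  ext u
  simp only [rampUp, indicator_apply, mem_Ioc, mem_ofPred_eq, mem_Icc]
  split_ifs <;> constructor <;> intro <;> grind

theorem setOf_le_tent {t : ℝ} (ht : 0 < t) :
    {u | t ≤ tent δ c u} = Icc (c - (δ - t)) (c + (δ - t)) := by
  ext u
  simp only [tent, mem_ofPred_eq, mem_Icc, le_max_iff]
  cases abs_cases (u - c) <;> grind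

theorem integral_rampUp_le_integral_tent {v : ℝ≥0} (hv : v ≠ 0) {D m m' : ℝ}
    (h : |c - m| ≤ D - m') :
    ∫ u, rampUp δ D u ∂gaussianReal m' v ≤ ∫ u, tent δ c u ∂gaussianReal m v := by
  refine integral_le_of_superlevel_le (ae_of_all _ (rampUp_nonneg δ D))
    (ae_of_all _ (tent_nonneg δ c)) (measurable_rampUp δ D).aemeasurable ?_ fun t ht => ?_
  · rw [tent_eq_rampUp_add_rampDown]
    exact (integrable_rampUp _ δ c).add (integrable_rampDown _ δ c)
  · rw [setOf_le_rampUp ht, setOf_le_tent ht]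
    exact gaussianReal_Icc_le hv h _

end Tent

section GaussianDensity

variable {σ : ℝ}

theorem gpdf_eq_gaussianPDFReal (hσ : 0 < σ) (x : ℝ) :
    gpdf σ x = gaussianPDFReal x (σ ^ 2).toNNReal := by
  ext t
  rw [gpdf, gaussianPDFReal, Real.coe_toNNReal _ (sq_nonneg σ), sqrt_mul' _ (sq_nonneg σ),
    sqrt_sq hσ.le, one_div, mul_comm σ]

theorem toNNReal_sq_ne_zero (hσ : 0 < σ) : (σ ^ 2).toNNReal ≠ 0 := by
  simpa using hσ.ne'

theorem continuous_gpdf (σ x : ℝ) : Continuous (gpdf σ x) := by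
  unfold gpdf; fun_prop

theorem integrable_gpdf (hσ : 0 < σ) (x : ℝ) : Integrable (gpdf σ x) :=
  gpdf_eq_gaussianPDFReal hσ x ▸ integrable_gaussianPDFReal x _

theorem integral_gpdf (hσ : 0 < σ) (x : ℝ) : ∫ t, gpdf σ x t = 1 :=
  gpdf_eq_gaussianPDFReal hσ x ▸ integral_gaussianPDFReal_eq_one x (toNNReal_sq_ne_zero hσ)

theorem integral_gpdf_mul_sub_pos (hσ : 0 < σ) (x : ℝ) {a b : ℝ} (hab : a < b) :
    0 < ∫ t in a..b, gpdf σ x t * (t - a) := by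
  refine intervalIntegral.intervalIntegral_pos_of_pos_on ?_ (fun t ht => ?_) hab
  · exact ((continuous_gpdf σ x).mul (continuous_id.sub continuous_const)).intervalIntegrable _ _
  · rw [gpdf_eq_gaussianPDFReal hσ]
    exact mul_pos (gaussianPDFReal_pos _ _ _ (toNNReal_sq_ne_zero hσ)) (sub_pos.2 ht.1)

theorem integral_indicator_gaussianReal (hσ : 0 < σ) (x : ℝ) {s : Set ℝ} (hs : MeasurableSet s)
    (w : ℝ → ℝ) :
    ∫ u, s.indicator w u ∂gaussianReal x (σ ^ 2).toNNReal = ∫ t in s, gpdf σ x t * w t := by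
  simp_rw [integral_gaussianReal_eq_integral_smul (toNNReal_sq_ne_zero hσ), smul_eq_mul,
    ← gpdf_eq_gaussianPDFReal hσ, ← indicator_mul_right, integral_indicator hs]

variable {δ : ℝ}

theorem integral_rampUp_gaussianReal (hσ : 0 < σ) (x : ℝ) (hδ : 0 ≤ δ) (c : ℝ) :
    ∫ u, rampUp δ c u ∂gaussianReal x (σ ^ 2).toNNReal
      = ∫ t in (c - δ)..c, gpdf σ x t * (t - (c - δ)) := by
  rw [rampUp, integral_indicator_gaussianReal hσ x measurableSet_Ioc,
    intervalIntegral.integral_of_le (by linarith)]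

theorem integral_rampDown_gaussianReal (hσ : 0 < σ) (x : ℝ) (hδ : 0 ≤ δ) (c : ℝ) :
    ∫ u, rampDown δ c u ∂gaussianReal x (σ ^ 2).toNNReal
      = ∫ t in c..(c + δ), gpdf σ x t * (c + δ - t) := by
  rw [rampDown, integral_indicator_gaussianReal hσ x measurableSet_Ioc,
    intervalIntegral.integral_of_le (by linarith)]

theorem integral_rampUp_gaussianReal_le (hσ : 0 < σ) (x : ℝ) (hδ : 0 ≤ δ) (c : ℝ) :
    ∫ u, rampUp δ c u ∂gaussianReal x (σ ^ 2).toNNReal ≤ δ * ∫ t in Iic c, gpdf σ x t := by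
  calc ∫ u, rampUp δ c u ∂gaussianReal x (σ ^ 2).toNNReal
      ≤ ∫ u, (Iic c).indicator (fun _ => δ) u ∂gaussianReal x (σ ^ 2).toNNReal :=
        integral_mono_of_nonneg (ae_of_all _ (rampUp_nonneg δ c))
          ((integrable_const δ).indicator measurableSet_Iic)
          (ae_of_all _ (rampUp_le_indicator_Iic hδ))
    _ = δ * ∫ t in Iic c, gpdf σ x t := by
        rw [integral_indicator_gaussianReal hσ x measurableSet_Iic, integral_mul_const, mul_comm]

theorem integral_rampDown_gaussianReal_le (hσ : 0 < σ) (x : ℝ) (hδ : 0 ≤ δ) (c : ℝ) :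
    ∫ u, rampDown δ c u ∂gaussianReal x (σ ^ 2).toNNReal ≤ δ * ∫ t in Ici c, gpdf σ x t := by
  calc ∫ u, rampDown δ c u ∂gaussianReal x (σ ^ 2).toNNReal
      ≤ ∫ u, (Ici c).indicator (fun _ => δ) u ∂gaussianReal x (σ ^ 2).toNNReal :=
        integral_mono_of_nonneg (ae_of_all _ (rampDown_nonneg δ c))
          ((integrable_const δ).indicator measurableSet_Ici)
          (ae_of_all _ (rampDown_le_indicator_Ici hδ))
    _ = δ * ∫ t in Ici c, gpdf σ x t := by
        rw [integral_indicator_gaussianReal hσ x measurableSet_Ici, integral_mul_const, mul_comm]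

end GaussianDensity

section QuantizedGaussian

variable {Cq σ : ℝ} {k : ℕ}

noncomputable def qStep (Cq : ℝ) (k : ℕ) : ℝ := 2 * Cq / ((k : ℝ) - 1)

theorem qStep_pos (hC : 0 < Cq) (hk : 2 ≤ k) : 0 < qStep Cq k := by
  have : (2 : ℝ) ≤ k := by exact_mod_cast hk
  unfold qStep; exact div_pos (by linarith) (by linarith)

theorem cast_sub_one_mul_qStep (hk : 2 ≤ k) : ((k : ℝ) - 1) * qStep Cq k = 2 * Cq := by
  have : (2 : ℝ) ≤ k := by exact_mod_cast hk
  unfold qStep; field_simp [show (k : ℝ) - 1 ≠ 0 by linarith]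

theorem Blev_eq_add_mul (r : ℕ) : Blev Cq k r = -Cq + r * qStep Cq k := rfl

theorem Blev_succ (r : ℕ) : Blev Cq k (r + 1) = Blev Cq k r + qStep Cq k := by
  simp only [Blev, qStep]; push_cast; ring

theorem Blev_sub_one {r : ℕ} (hr : 1 ≤ r) : Blev Cq k (r - 1) = Blev Cq k r - qStep Cq k := by
  rw [eq_sub_iff_add_eq, ← Blev_succ, Nat.sub_add_cancel hr]

theorem Blev_last (hk : 2 ≤ k) : Blev Cq k (k - 1) = Cq := by
  rw [Blev_eq_add_mul, Nat.cast_sub (by omega), Nat.cast_one, cast_sub_one_mul_qStep hk]; ring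

theorem Blev_sub_two (hk : 2 ≤ k) : Blev Cq k (k - 2) = Cq - qStep Cq k := by
  rw [show k - 2 = k - 1 - 1 by omega, Blev_sub_one (by omega), Blev_last hk]

theorem Blev_mem_Icc (hC : 0 < Cq) (hk : 2 ≤ k) {r : ℕ} (hr : r < k) :
    Blev Cq k r ∈ Icc (-Cq) Cq := by
  have hr' : (r : ℝ) ≤ k - 1 := by
    have : ((r + 1 : ℕ) : ℝ) ≤ k := by exact_mod_cast hr
    push_cast at this; linarith
  have hδ := qStep_pos hC hk
  have := mul_le_mul_of_nonneg_right hr' hδ.le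
  rw [cast_sub_one_mul_qStep hk] at this
  rw [Blev_eq_add_mul]
  constructor <;> nlinarith

theorem qgPmf_eq (hk : 2 ≤ k) (x : ℝ) (r : ℕ) :
    qgPmf Cq σ k x r =
      (if r = 0 then ∫ t in Iic (Blev Cq k 0), gpdf σ x t
        else ∫ t in (Blev Cq k (r - 1))..(Blev Cq k r),
          gpdf σ x t * (t - Blev Cq k (r - 1)) / qStep Cq k)
      + (if r = k - 1 then ∫ t in Ici (Blev Cq k (k - 1)), gpdf σ x t
        else ∫ t in (Blev Cq k r)..(Blev Cq k (r + 1)),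
          gpdf σ x t * (Blev Cq k (r + 1) - t) / qStep Cq k) := by
  rcases eq_or_ne r 0 with rfl | h0
  · simp [qgPmf, qStep, show 0 ≠ k - 1 by omega]
  rcases eq_or_ne r (k - 1) with rfl | h1
  · simp [qgPmf, qStep, h0, show k - 1 - 1 = k - 2 by omega]
  · simp [qgPmf, qStep, h0, h1]

theorem sum_qgPmf (hC : Cq ≠ 0) (hσ : 0 < σ) (hk : 2 ≤ k) (x : ℝ) :
    ∑ r ∈ Finset.range k, qgPmf Cq σ k x r = 1 := by
  have hδ : qStep Cq k ≠ 0 := by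
    have : (2 : ℝ) ≤ k := by exact_mod_cast hk
    unfold qStep; exact div_ne_zero (by simpa using hC) (by linarith)
  have hint := integrable_gpdf hσ x
  have hcell : ∀ i : ℕ,
      (∫ t in (Blev Cq k i)..(Blev Cq k (i + 1)), gpdf σ x t * (t - Blev Cq k i) / qStep Cq k)
        + (∫ t in (Blev Cq k i)..(Blev Cq k (i + 1)),
            gpdf σ x t * (Blev Cq k (i + 1) - t) / qStep Cq k)
        = ∫ t in (Blev Cq k i)..(Blev Cq k (i + 1)), gpdf σ x t := by
    intro i
    have hc := continuous_gpdf σ x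
    rw [← intervalIntegral.integral_add (by apply Continuous.intervalIntegrable; fun_prop)
      (by apply Continuous.intervalIntegrable; fun_prop)]
    refine intervalIntegral.integral_congr fun t _ => ?_
    simp only [Blev_succ]
    field_simp
    ring
  -- the rising half of cell `i` belongs to `P(i + 1)` and its falling half to `P(i)`:
  -- regrouped by cells, the sum is the mass of `[B 0, B (k - 1)]` plus the two tails
  obtain ⟨n, rfl⟩ : ∃ n, k = n + 1 := ⟨k - 1, by omega⟩
  rw [Finset.sum_congr rfl fun r _ => qgPmf_eq hk x r,
    Finset.sum_add_distrib, Finset.sum_range_succ', Finset.sum_range_succ]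
  simp only [Nat.add_sub_cancel, Nat.add_eq_zero_iff, one_ne_zero, and_false, if_false, if_true]
  rw [Finset.sum_congr rfl fun i hi => if_neg (Finset.mem_range.1 hi).ne, add_add_add_comm,
    ← Finset.sum_add_distrib, Finset.sum_congr rfl fun i _ => hcell i,
    intervalIntegral.sum_integral_adjacent_intervals fun i _ => hint.intervalIntegrable,
    ← intervalIntegral.integral_Iic_sub_Iic hint.integrableOn hint.integrableOn,
    integral_Ici_eq_integral_Ioi, ← integral_gpdf hσ x,
    ← intervalIntegral.integral_Iic_add_Ioi hint.integrableOn hint.integrableOn]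
  ring

theorem integral_tent_le_qStep_mul_qgPmf (hC : 0 < Cq) (hσ : 0 < σ) (hk : 2 ≤ k) (x : ℝ)
    (r : ℕ) :
    ∫ u, tent (qStep Cq k) (Blev Cq k r) u ∂gaussianReal x (σ ^ 2).toNNReal
      ≤ qStep Cq k * qgPmf Cq σ k x r := by
  have hδ := qStep_pos hC hk
  rw [tent_eq_rampUp_add_rampDown, integral_add' (integrable_rampUp _ _ _)
    (integrable_rampDown _ _ _), qgPmf_eq hk x r, mul_add]
  refine add_le_add ?_ ?_
  · split_ifs with h0
    · rw [h0]; exact integral_rampUp_gaussianReal_le hσ x hδ.le _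
    · rw [intervalIntegral.integral_div, mul_div_cancel₀ _ hδ.ne', Blev_sub_one (by omega),
        integral_rampUp_gaussianReal hσ x hδ.le]
  · split_ifs with h1
    · rw [h1]; exact integral_rampDown_gaussianReal_le hσ x hδ.le _
    · rw [intervalIntegral.integral_div, mul_div_cancel₀ _ hδ.ne', Blev_succ,
        integral_rampDown_gaussianReal hσ x hδ.le]

theorem div_qStep_le_qgPmf (hC : 0 < Cq) (hσ : 0 < σ) (hk : 2 ≤ k) {x : ℝ}
    (hx : x ∈ Icc (-(Cq / 2)) (Cq / 2)) {r : ℕ} (hr : r < k) :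
    (∫ t in (Blev Cq k (k - 2))..(Blev Cq k (k - 1)),
        gpdf σ (-(Cq / 2)) t * (t - Blev Cq k (k - 2))) / qStep Cq k ≤ qgPmf Cq σ k x r := by
  have hδ := qStep_pos hC hk
  have hdist : |Blev Cq k r - x| ≤ Cq - -(Cq / 2) := by
    obtain ⟨hB₁, hB₂⟩ := Blev_mem_Icc hC hk hr
    rw [abs_le]; constructor <;> linarith [hx.1, hx.2]
  rw [div_le_iff₀' hδ, Blev_sub_two hk, Blev_last hk, ← integral_rampUp_gaussianReal hσ _ hδ.le]
  exact (integral_rampUp_le_integral_tent (toNNReal_sq_ne_zero hσ) hdist).trans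
    (integral_tent_le_qStep_mul_qgPmf hC hσ hk x r)

end QuantizedGaussian

/-- Theorem 2, general `α > 1`: the Rényi divergence of order `α` between the
quantized-Gaussian pmfs at `x, x' ∈ [-C_q/2, C_q/2]` is bounded by `ε_∞`. -/
theorem quantGauss_renyi_le_eps_infty (Cq σ : ℝ) (hC : 0 < Cq) (hσ : 0 < σ)
    (k : ℕ) (hk : 2 ≤ k) (α : ℝ) (hα : 1 < α) (x x' : ℝ)
    (hx : x ∈ Set.Icc (-(Cq / 2)) (Cq / 2)) (hx' : x' ∈ Set.Icc (-(Cq / 2)) (Cq / 2)) :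
    (1 / (α - 1)) * Real.log (∑ r ∈ Finset.range k,
        qgPmf Cq σ k x r ^ α * qgPmf Cq σ k x' r ^ (1 - α))
      ≤ Real.log ((2 * Cq / ((k : ℝ) - 1)) /
          ∫ t in (Blev Cq k (k - 2))..(Blev Cq k (k - 1)),
            gpdf σ (-(Cq / 2)) t * (t - Blev Cq k (k - 2))) := by
  have hδ := qStep_pos hC hk
  have hI : 0 < ∫ t in (Blev Cq k (k - 2))..(Blev Cq k (k - 1)),
      gpdf σ (-(Cq / 2)) t * (t - Blev Cq k (k - 2)) := by
    rw [Blev_sub_two hk, Blev_last hk]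
    exact integral_gpdf_mul_sub_pos hσ _ (sub_lt_self _ hδ)
  have hm := div_pos hI hδ
  have hbound := renyiDiv_le_neg_log (s := Finset.range k) hα hm
    (fun r hr => hm.le.trans (div_qStep_le_qgPmf hC hσ hk hx (Finset.mem_range.1 hr)))
    (sum_qgPmf hC.ne' hσ hk x)
    (fun r hr => div_qStep_le_qgPmf hC hσ hk hx' (Finset.mem_range.1 hr))
  rwa [← log_inv, inv_div] at hbound
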